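/- Let (τ_j)_{j=1}^n and (ω_j)_{j=1}^n be Parseval frames for a finite-dimensional Hilbert space H. Then for every nonzero h ∈ H, (‖θ_τ h‖_0 + ‖θ_ω h‖_0)/2 ≥ 1 / max_{j,k} |⟨τ_j, ω_k⟩|. -/

import Mathlib

/-!
Expanding `⟪h, τ j⟫` in the Parseval frame `ω` and applying Cauchy–Schwarz over the support
`B` of `θ_ω h` bounds every `|⟪h, τ j⟫|²` by `|B| μ² ‖h‖²`, where `μ = max |⟪τ j, ω k⟫|`.
Summing over the support `A` of `θ_τ h` and using Parseval for `τ` gives `1 ≤ |A| |B| μ²`,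
and AM–GM turns this into `(|A| + |B|) / 2 ≥ √(|A| |B|) ≥ 1 / μ`.
-/

open scoped InnerProductSpace

section ParsevalFrame

variable (𝕜 : Type*) {E ι κ : Type*} [RCLike 𝕜] [NormedAddCommGroup E] [InnerProductSpace 𝕜 E]
  [Fintype ι] [Fintype κ]

def IsParsevalFrame (ω : ι → E) : Prop :=
  ∀ h : E, ‖h‖ ^ 2 = ∑ j, ‖⟪h, ω j⟫_𝕜‖ ^ 2

def frameOperator (ω : ι → E) : E →ₗ[𝕜] E :=
  ∑ k, (innerₛₗ 𝕜 (ω k)).smulRight (ω k)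

variable {𝕜}

theorem frameOperator_apply (ω : ι → E) (x : E) :
    frameOperator 𝕜 ω x = ∑ k, ⟪ω k, x⟫_𝕜 • ω k := by
  simp [frameOperator]

theorem inner_frameOperator_left (ω : ι → E) (x y : E) :
    ⟪frameOperator 𝕜 ω x, y⟫_𝕜 = ∑ k, ⟪x, ω k⟫_𝕜 * ⟪ω k, y⟫_𝕜 := by
  rw [frameOperator_apply, sum_inner]
  simp only [inner_smul_left, inner_conj_symm]

theorem frameOperator_isSymmetric (ω : ι → E) : (frameOperator 𝕜 ω).IsSymmetric := by
  intro x y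
  rw [inner_frameOperator_left, frameOperator_apply, inner_sum]
  simp only [inner_smul_right, mul_comm]

namespace IsParsevalFrame

variable {ω : ι → E} {τ : κ → E}

theorem frameOperator_eq_id (hω : IsParsevalFrame 𝕜 ω) : frameOperator 𝕜 ω = LinearMap.id := by
  rw [← sub_eq_zero,
    ← ((frameOperator_isSymmetric ω).sub LinearMap.IsSymmetric.id).inner_map_self_eq_zero]
  intro x
  simp only [LinearMap.sub_apply, inner_sub_left, inner_frameOperator_left, LinearMap.id_apply,
    inner_self_eq_norm_sq_to_K, sub_eq_zero]
  norm_cast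
  rw [hω x]
  push_cast
  refine Finset.sum_congr rfl fun k _ => ?_
  rw [← inner_conj_symm x, RCLike.conj_mul, RCLike.norm_conj]

theorem inner_eq_sum (hω : IsParsevalFrame 𝕜 ω) (x y : E) :
    ⟪x, y⟫_𝕜 = ∑ k, ⟪x, ω k⟫_𝕜 * ⟪ω k, y⟫_𝕜 := by
  rw [← inner_frameOperator_left, hω.frameOperator_eq_id, LinearMap.id_apply]

theorem sq_sum_norm_inner_le (hω : IsParsevalFrame 𝕜 ω) (h : E) (s : Finset ι) :
    (∑ k ∈ s, ‖⟪h, ω k⟫_𝕜‖) ^ 2 ≤ s.card * ‖h‖ ^ 2 :=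
  calc (∑ k ∈ s, ‖⟪h, ω k⟫_𝕜‖) ^ 2
      ≤ s.card * ∑ k ∈ s, ‖⟪h, ω k⟫_𝕜‖ ^ 2 := sq_sum_le_card_mul_sum_sq
    _ ≤ s.card * ‖h‖ ^ 2 := by
      rw [hω h]
      gcongr
      exact Finset.subset_univ s

theorem sq_norm_inner_le (hω : IsParsevalFrame 𝕜 ω) {h : E} {s : Finset ι}
    (hs : ∀ k ∉ s, ⟪h, ω k⟫_𝕜 = 0) {v : E} {M : ℝ} (hM : ∀ k, ‖⟪v, ω k⟫_𝕜‖ ≤ M) :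
    ‖⟪h, v⟫_𝕜‖ ^ 2 ≤ s.card * M ^ 2 * ‖h‖ ^ 2 := by
  have hsum : ‖⟪h, v⟫_𝕜‖ ≤ M * ∑ k ∈ s, ‖⟪h, ω k⟫_𝕜‖ :=
    calc ‖⟪h, v⟫_𝕜‖ = ‖∑ k ∈ s, ⟪h, ω k⟫_𝕜 * ⟪ω k, v⟫_𝕜‖ := by
          rw [hω.inner_eq_sum, Finset.sum_subset (Finset.subset_univ s) fun k _ hk ↦ by
            rw [hs k hk, zero_mul]]
      _ ≤ ∑ k ∈ s, ‖⟪h, ω k⟫_𝕜‖ * M := by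
          refine (norm_sum_le _ _).trans (Finset.sum_le_sum fun k _ ↦ ?_)
          rw [norm_mul, norm_inner_symm (ω k) v]
          gcongr
          exact hM k
      _ = M * ∑ k ∈ s, ‖⟪h, ω k⟫_𝕜‖ := by rw [← Finset.sum_mul, mul_comm]
  calc ‖⟪h, v⟫_𝕜‖ ^ 2 ≤ M ^ 2 * (∑ k ∈ s, ‖⟪h, ω k⟫_𝕜‖) ^ 2 := by
        rw [← mul_pow]; gcongr
    _ ≤ M ^ 2 * (s.card * ‖h‖ ^ 2) := by gcongr; exact hω.sq_sum_norm_inner_le h s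
    _ = s.card * M ^ 2 * ‖h‖ ^ 2 := by ring

theorem one_le_card_mul_card_mul_sq (hτ : IsParsevalFrame 𝕜 τ) (hω : IsParsevalFrame 𝕜 ω)
    {h : E} (hh : h ≠ 0) {s : Finset κ} {t : Finset ι} (hs : ∀ j ∉ s, ⟪h, τ j⟫_𝕜 = 0)
    (ht : ∀ k ∉ t, ⟪h, ω k⟫_𝕜 = 0) {M : ℝ} (hM : ∀ j k, ‖⟪τ j, ω k⟫_𝕜‖ ≤ M) :
    1 ≤ s.card * t.card * M ^ 2 := by
  have hpos : 0 < ‖h‖ ^ 2 := by positivity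
  refine le_of_mul_le_mul_right ?_ hpos
  calc 1 * ‖h‖ ^ 2 = ∑ j ∈ s, ‖⟪h, τ j⟫_𝕜‖ ^ 2 := by
        rw [one_mul, hτ h, Finset.sum_subset (Finset.subset_univ s) fun j _ hj ↦ by
          rw [hs j hj, norm_zero, zero_pow two_ne_zero]]
    _ ≤ ∑ _j ∈ s, t.card * M ^ 2 * ‖h‖ ^ 2 :=
        Finset.sum_le_sum fun j _ ↦ hω.sq_norm_inner_le ht (hM j)
    _ = s.card * t.card * M ^ 2 * ‖h‖ ^ 2 := by
        rw [Finset.sum_const, nsmul_eq_mul]; ring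

end IsParsevalFrame

end ParsevalFrame

theorem one_div_le_add_div_two_of_one_le_mul_mul_sq {a b M : ℝ} (ha : 0 ≤ a) (hb : 0 ≤ b)
    (hM : 0 ≤ M) (h : 1 ≤ a * b * M ^ 2) : 1 / M ≤ (a + b) / 2 := by
  have hM₀ : 0 < M := hM.lt_of_ne (by rintro rfl; norm_num at h)
  rw [div_le_div_iff₀ hM₀ two_pos]
  nlinarith [sq_nonneg ((a - b) * M), mul_nonneg (add_nonneg ha hb) hM]

theorem donoho_stark_additive_general
    {H : Type*} [NormedAddCommGroup H] [InnerProductSpace ℂ H]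
    {n : ℕ} (τ ω : Fin n → H)
    (hτ : ∀ h : H, ‖h‖ ^ 2 = ∑ j, ‖(inner ℂ h (τ j) : ℂ)‖ ^ 2)
    (hω : ∀ h : H, ‖h‖ ^ 2 = ∑ j, ‖(inner ℂ h (ω j) : ℂ)‖ ^ 2)
    (h : H) (hh : h ≠ 0) :
    (((Finset.univ.filter (fun j => (inner ℂ h (τ j) : ℂ) ≠ 0)).card : ℝ) +
      ((Finset.univ.filter (fun k => (inner ℂ h (ω k) : ℂ) ≠ 0)).card : ℝ)) / 2 ≥
      1 / (⨆ j, ⨆ k, ‖(inner ℂ (τ j) (ω k) : ℂ)‖) := by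
  have hM : ∀ j k, ‖⟪τ j, ω k⟫_ℂ‖ ≤ ⨆ j, ⨆ k, ‖⟪τ j, ω k⟫_ℂ‖ := fun j k ↦
    (le_ciSup (Finite.bddAbove_range _) k).trans
      (le_ciSup (f := fun j ↦ ⨆ k, ‖⟪τ j, ω k⟫_ℂ‖) (Finite.bddAbove_range _) j)
  refine one_div_le_add_div_two_of_one_le_mul_mul_sq (Nat.cast_nonneg _) (Nat.cast_nonneg _)
    (Real.iSup_nonneg fun j ↦ Real.iSup_nonneg fun k ↦ norm_nonneg _) ?_
  exact IsParsevalFrame.one_le_card_mul_card_mul_sq hτ hω hh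
    (fun j hj ↦ by simpa using hj) (fun k hk ↦ by simpa using hk) hM

/-- Additive form of the Donoho–Stark–Elad–Bruckstein uncertainty principle:
`(‖θ_τ h‖₀ + ‖θ_ω h‖₀)/2 ≥ 1 / max_{j,k} |⟨τ_j, ω_k⟩|` for nonzero `h`. -/
theorem donoho_stark_additive
    {H : Type*} [NormedAddCommGroup H] [InnerProductSpace ℂ H] [FiniteDimensional ℂ H]
    {n : ℕ} (τ ω : Fin n → H)
    (hτ : ∀ h : H, ‖h‖ ^ 2 = ∑ j, ‖(inner ℂ h (τ j) : ℂ)‖ ^ 2)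
    (hω : ∀ h : H, ‖h‖ ^ 2 = ∑ j, ‖(inner ℂ h (ω j) : ℂ)‖ ^ 2)
    (h : H) (hh : h ≠ 0) :
    (((Finset.univ.filter (fun j => (inner ℂ h (τ j) : ℂ) ≠ 0)).card : ℝ) +
      ((Finset.univ.filter (fun k => (inner ℂ h (ω k) : ℂ) ≠ 0)).card : ℝ)) / 2 ≥
      1 / (⨆ j, ⨆ k, ‖(inner ℂ (τ j) (ω k) : ℂ)‖) :=
  donoho_stark_additive_general τ ω hτ hω h hh
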